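/- arXiv:2410.08594 — 4 statements merged into one kernel-verified Lean document; each statement's English description precedes it below -/
import Mathlib

section
/- Let g ∈ ℝ and ε ∈ ℝ. Suppose A : ℝ → ℝ is four times continuously differentiable and B : ℝ → ℂ is twice continuously differentiable, and for all x ∈ ℝ they satisfy A''''(x) = A(x)(1 − A(x)² − g|B(x)|²) and B''(x) = ε² B(x)(−1 + g A(x)² + |B(x)|²). Then the function W_g(x) = 2ε² A'(x)A'''(x) − ε² A''(x)² − |B'(x)|² + (ε²/2)(A(x)² + |B(x)|² − 1)² + ε²(g − 1) A(x)² |B(x)|² is constant on ℝ. -/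
/-!
Differentiating `W_g` and substituting the two equations, the derivative collapses to
`2ε² A A' (…) + 2ε² ⟪B, B'⟫ (…)` with both brackets identically zero. Only `‖B‖²` and
`⟪B, B'⟫` enter, so the argument works for `B` with values in any real inner product space.
-/

theorem ContDiff.hasDerivAt_iteratedDeriv {F : Type*} [NormedAddCommGroup F] [NormedSpace ℝ F]
    {n : ℕ∞} {f : ℝ → F} (hf : ContDiff ℝ n f) {m : ℕ} (hm : (m : ℕ∞) < n) (x : ℝ) :
    HasDerivAt (iteratedDeriv m f) (iteratedDeriv (m + 1) f x) x := by
  rw [iteratedDeriv_succ]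
  exact (hf.differentiable_iteratedDeriv m (mod_cast hm) x).hasDerivAt

section ReducedSystem

variable {E : Type*} [NormedAddCommGroup E] [InnerProductSpace ℝ E]

noncomputable def firstIntegralW (g ε : ℝ) (A : ℝ → ℝ) (B : ℝ → E) (x : ℝ) : ℝ :=
  2 * ε ^ 2 * deriv A x * iteratedDeriv 3 A x
    - ε ^ 2 * (iteratedDeriv 2 A x) ^ 2
    - ‖deriv B x‖ ^ 2
    + ε ^ 2 / 2 * ((A x) ^ 2 + ‖B x‖ ^ 2 - 1) ^ 2
    + ε ^ 2 * (g - 1) * (A x) ^ 2 * ‖B x‖ ^ 2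

theorem hasDerivAt_firstIntegralW {g ε : ℝ} {A : ℝ → ℝ} {B : ℝ → E}
    (hA : ContDiff ℝ 4 A) (hB : ContDiff ℝ 2 B)
    (hAeq : ∀ x, iteratedDeriv 4 A x = A x * (1 - A x ^ 2 - g * ‖B x‖ ^ 2))
    (hBeq : ∀ x, iteratedDeriv 2 B x = (ε ^ 2 * (-1 + g * A x ^ 2 + ‖B x‖ ^ 2)) • B x)
    (x : ℝ) : HasDerivAt (firstIntegralW g ε A B) 0 x := by
  have dA0 : HasDerivAt A (deriv A x) x := by
    simpa using hA.hasDerivAt_iteratedDeriv (m := 0) (by norm_num) x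
  have dA1 : HasDerivAt (deriv A) (iteratedDeriv 2 A x) x := by
    simpa using hA.hasDerivAt_iteratedDeriv (m := 1) (by norm_num) x
  have dA2 := hA.hasDerivAt_iteratedDeriv (m := 2) (by norm_num) x
  have dA3 := hA.hasDerivAt_iteratedDeriv (m := 3) (by norm_num) x
  have dB0 : HasDerivAt B (deriv B x) x := by
    simpa using hB.hasDerivAt_iteratedDeriv (m := 0) (by norm_num) x
  have dB1 : HasDerivAt (deriv B) (iteratedDeriv 2 B x) x := by
    simpa using hB.hasDerivAt_iteratedDeriv (m := 1) (by norm_num) x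
  have hW := (((((dA1.mul dA3).const_mul (2 * ε ^ 2)).sub
    ((dA2.pow 2).const_mul (ε ^ 2))).sub dB1.norm_sq).add
    ((((dA0.pow 2).add dB0.norm_sq).sub_const 1).pow 2 |>.const_mul (ε ^ 2 / 2))).add
    (((dA0.pow 2).mul dB0.norm_sq).const_mul (ε ^ 2 * (g - 1)))
  refine (hW.congr_deriv ?_).congr_of_eventuallyEq (.of_forall fun t => ?_)
  · rw [hAeq, hBeq, inner_smul_right, real_inner_comm (B x)]
    simp only [Pi.add_apply, Pi.pow_apply, Nat.cast_ofNat]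
    ring
  · simp only [firstIntegralW, Pi.add_apply, Pi.sub_apply, Pi.mul_apply, Pi.pow_apply]
    ring

end ReducedSystem

/-- The first integral `W_g` of the complex reduced system
`A'''' = A(1 − A² − g|B|²)`, `B'' = ε² B(−1 + g A² + |B|²)`
is constant along any solution. -/
theorem first_integral_Wg_constant (g ε : ℝ) (A : ℝ → ℝ) (B : ℝ → ℂ)
    (hA : ContDiff ℝ 4 A) (hB : ContDiff ℝ 2 B)
    (hAeq : ∀ x : ℝ, iteratedDeriv 4 A x
      = A x * (1 - (A x) ^ 2 - g * ‖B x‖ ^ 2))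
    (hBeq : ∀ x : ℝ, iteratedDeriv 2 B x
      = (ε : ℂ) ^ 2 * B x * (-1 + (g : ℂ) * (A x : ℂ) ^ 2 + (‖B x‖ : ℂ) ^ 2)) :
    ∃ c : ℝ, ∀ x : ℝ,
      2 * ε ^ 2 * deriv A x * iteratedDeriv 3 A x
        - ε ^ 2 * (iteratedDeriv 2 A x) ^ 2
        - ‖deriv B x‖ ^ 2
        + ε ^ 2 / 2 * ((A x) ^ 2 + ‖B x‖ ^ 2 - 1) ^ 2
        + ε ^ 2 * (g - 1) * (A x) ^ 2 * ‖B x‖ ^ 2 = c := by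
  have hBeq' (x : ℝ) :
      iteratedDeriv 2 B x = (ε ^ 2 * (-1 + g * A x ^ 2 + ‖B x‖ ^ 2)) • B x := by
    rw [hBeq, Complex.real_smul]
    push_cast
    ring
  have hW := hasDerivAt_firstIntegralW hA hB hAeq hBeq'
  exact ⟨firstIntegralW g ε A B 0, fun x =>
    is_const_of_deriv_eq_zero (fun t => (hW t).differentiableAt) (fun t => (hW t).deriv) x 0⟩
end

section
/- Let α, β, γ, δ be real numbers and ε > 0. Suppose B₀, B₁ : ℝ → ℂ are continuously differentiable and satisfy for all x the truncated 1:1 resonance system B₀'(x) = (i/(2ε))B₀(x) + B₁(x) + i ε³ B₀(x) P(x) and B₁'(x) = (i/(2ε))B₁(x) + ε² B₀(x) Q(x) + i ε³ B₁(x) P(x), where K(x) = (i/2)(B₀(x) conj(B₁(x)) − conj(B₀(x)) B₁(x)), P(x) = α + β|B₀(x)|² + ε γ K(x) and Q(x) = −1 + |B₀(x)|² + ε δ K(x). Then K(x) = (i/2)(B₀(x) conj(B₁(x)) − conj(B₀(x)) B₁(x)) is real-valued and constant on ℝ. -/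
/-!
Writing `K = Im (conj B₀ · B₁)` makes `K` real, and then `P` and `Q` are real too. The system
then reads `B₀' = iθ B₀ + B₁`, `B₁' = iθ B₁ + q B₀` with real `θ = 1/(2ε) + ε³ P` and `q = ε² Q`,
so `(conj B₀ · B₁)' = |B₁|² + q |B₀|²` is real: the phase rotations cancel and `K' = 0`.
-/

open Complex ComplexConjugate

theorem Complex.I_div_two_mul_sub_conj_mul (z w : ℂ) :
    I / 2 * (z * conj w - conj z * w) = ((conj z * w).im : ℂ) := by
  apply Complex.ext <;> simp; ring

theorem hasDerivAt_conj_mul_of_phase_system {B₀ B₁ : ℝ → ℂ} {θ q : ℝ} {x : ℝ}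
    (h₀ : HasDerivAt B₀ (I * θ * B₀ x + B₁ x) x)
    (h₁ : HasDerivAt B₁ (I * θ * B₁ x + q * B₀ x) x) :
    HasDerivAt (fun x => conj (B₀ x) * B₁ x) ((‖B₁ x‖ ^ 2 + q * ‖B₀ x‖ ^ 2 : ℝ) : ℂ) x := by
  have h := h₀.star.mul h₁
  simp only [← starRingEnd_apply] at h
  refine h.congr_deriv ?_
  simp only [map_add, map_mul, conj_I, conj_ofReal]
  push_cast
  rw [← mul_conj', ← mul_conj']
  ring

theorem hasDerivAt_im_conj_mul_of_phase_system {B₀ B₁ : ℝ → ℂ} {θ q : ℝ} {x : ℝ}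
    (h₀ : HasDerivAt B₀ (I * θ * B₀ x + B₁ x) x)
    (h₁ : HasDerivAt B₁ (I * θ * B₁ x + q * B₀ x) x) :
    HasDerivAt (fun x => (conj (B₀ x) * B₁ x).im) 0 x := by
  have := imCLM.hasFDerivAt.comp_hasDerivAt x (hasDerivAt_conj_mul_of_phase_system h₀ h₁)
  rwa [imCLM_apply, ofReal_im] at this

theorem K_real_and_constant_general (α β γ δ ε : ℝ)
    (B₀ B₁ : ℝ → ℂ) (hB₀ : ContDiff ℝ 1 B₀) (hB₁ : ContDiff ℝ 1 B₁)
    (K P Q : ℝ → ℂ)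
    (hK : ∀ x : ℝ, K x = (Complex.I / 2) *
      (B₀ x * (starRingEnd ℂ) (B₁ x) - (starRingEnd ℂ) (B₀ x) * B₁ x))
    (hP : ∀ x : ℝ, P x = (α : ℂ) + (β : ℂ) * (‖B₀ x‖ : ℂ) ^ 2
      + (ε : ℂ) * (γ : ℂ) * K x)
    (hQ : ∀ x : ℝ, Q x = -1 + (‖B₀ x‖ : ℂ) ^ 2
      + (ε : ℂ) * (δ : ℂ) * K x)
    (heq₀ : ∀ x : ℝ, deriv B₀ x
      = (Complex.I / (2 * ε)) * B₀ x + B₁ x + Complex.I * (ε : ℂ) ^ 3 * B₀ x * P x)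
    (heq₁ : ∀ x : ℝ, deriv B₁ x
      = (Complex.I / (2 * ε)) * B₁ x + (ε : ℂ) ^ 2 * B₀ x * Q x
        + Complex.I * (ε : ℂ) ^ 3 * B₁ x * P x) :
    ∃ c : ℝ, ∀ x : ℝ, K x = (c : ℂ) := by
  set k : ℝ → ℝ := fun x => (conj (B₀ x) * B₁ x).im
  have hKk (x : ℝ) : K x = k x := (hK x).trans (I_div_two_mul_sub_conj_mul _ _)
  have hPk (x : ℝ) : P x = ((α + β * ‖B₀ x‖ ^ 2 + ε * γ * k x : ℝ) : ℂ) := by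
    rw [hP, hKk]; push_cast; ring
  have hQk (x : ℝ) : Q x = ((-1 + ‖B₀ x‖ ^ 2 + ε * δ * k x : ℝ) : ℂ) := by
    rw [hQ, hKk]; push_cast; ring
  have hk (x : ℝ) : HasDerivAt k 0 x := by
    refine hasDerivAt_im_conj_mul_of_phase_system
      (θ := 1 / (2 * ε) + ε ^ 3 * (α + β * ‖B₀ x‖ ^ 2 + ε * γ * k x))
      (q := ε ^ 2 * (-1 + ‖B₀ x‖ ^ 2 + ε * δ * k x)) ?_ ?_
    · refine (hB₀.differentiable one_ne_zero x).hasDerivAt.congr_deriv ?_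
      rw [heq₀, hPk]; push_cast; ring
    · refine (hB₁.differentiable one_ne_zero x).hasDerivAt.congr_deriv ?_
      rw [heq₁, hPk, hQk]; push_cast; ring
  refine ⟨k 0, fun x => ?_⟩
  rw [hKk, is_const_of_deriv_eq_zero (fun y => (hk y).differentiableAt) (fun y => (hk y).deriv) x 0]

/-- Along any solution of the truncated 1:1 resonance system, the quantity
`K = (i/2)(B₀ conj B₁ − conj B₀ B₁)` is real-valued and constant. -/
theorem K_real_and_constant (α β γ δ ε : ℝ) (hε : 0 < ε)
    (B₀ B₁ : ℝ → ℂ) (hB₀ : ContDiff ℝ 1 B₀) (hB₁ : ContDiff ℝ 1 B₁)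
    (K P Q : ℝ → ℂ)
    (hK : ∀ x : ℝ, K x = (Complex.I / 2) *
      (B₀ x * (starRingEnd ℂ) (B₁ x) - (starRingEnd ℂ) (B₀ x) * B₁ x))
    (hP : ∀ x : ℝ, P x = (α : ℂ) + (β : ℂ) * (‖B₀ x‖ : ℂ) ^ 2
      + (ε : ℂ) * (γ : ℂ) * K x)
    (hQ : ∀ x : ℝ, Q x = -1 + (‖B₀ x‖ : ℂ) ^ 2
      + (ε : ℂ) * (δ : ℂ) * K x)
    (heq₀ : ∀ x : ℝ, deriv B₀ x
      = (Complex.I / (2 * ε)) * B₀ x + B₁ x + Complex.I * (ε : ℂ) ^ 3 * B₀ x * P x)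
    (heq₁ : ∀ x : ℝ, deriv B₁ x
      = (Complex.I / (2 * ε)) * B₁ x + (ε : ℂ) ^ 2 * B₀ x * Q x
        + Complex.I * (ε : ℂ) ^ 3 * B₁ x * P x) :
    ∃ c : ℝ, ∀ x : ℝ, K x = (c : ℂ) :=
  K_real_and_constant_general α β γ δ ε B₀ B₁ hB₀ hB₁ K P Q hK hP hQ heq₀ heq₁
end

section
/- For all real numbers α, β, γ, δ there exist ε₀ > 0, k₀ > 0 and C > 0 such that for every ε ∈ (0, ε₀) and every real k₊ with |k₊| ≤ k₀ there exist real numbers r₀ > 0 and r₁ satisfying, with ω₀ = (1 + ε²k₊)/(2ε), P₀ = α + β r₀² + ε γ r₀ r₁ and Q₀ = −1 + r₀² + ε δ r₀ r₁, the two relations ω₀ − 1/(2ε) − ε³ P₀ = r₁/r₀ and (r₁/r₀)² = −ε² Q₀, together with the estimates |r₀² − (1 − k₊²/4)| ≤ C ε² (|k₊| + ε²) and |r₁ − ε r₀ k₊ / 2| ≤ C ε³. -/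
/-! Writing `t = r₁ / (ε r₀)` and `η = ε²`, the second relation says exactly
`r₀² = (1 - t²) / (1 + η δ t)`, and the first one then becomes the scalar fixed-point
equation `t = k₊/2 - η P(t)`. For small `η` the right-hand side is a continuous self-map of
the interval `|t - k₊/2| ≤ A η`, `A = |α| + 2|β| + |γ|`, so it has a fixed point there, and
both estimates follow from `t = k₊/2 + O(ε²)`. -/

open Set Function

namespace RotatingWave

variable (α β γ δ : ℝ)

/-- `r₀²` as a function of `η = ε²` and `t = r₁ / (ε r₀)`. -/
noncomputable def amplitudeSq (η t : ℝ) : ℝ := (1 - t ^ 2) / (1 + η * δ * t)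

/-- The nonlinearity `P₀ = α + β r₀² + ε γ r₀ r₁`, rewritten in the variables `η`, `t`. -/
noncomputable def phaseCorrection (η t : ℝ) : ℝ :=
  α + β * amplitudeSq δ η t + η * γ * amplitudeSq δ η t * t

noncomputable def phaseMap (kp η t : ℝ) : ℝ := kp / 2 - η * phaseCorrection α β γ δ η t

variable {α β γ δ} {η t : ℝ}

lemma one_add_mul_mem_Icc (hη : 0 ≤ η) (hδη : |δ| * η ≤ 1) (ht : |t| ≤ 1 / 2) :
    1 + η * δ * t ∈ Icc (1 / 2 : ℝ) (3 / 2) := by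
  have h : |η * δ * t| ≤ 1 / 2 := by
    rw [abs_mul, abs_mul, abs_of_nonneg hη]
    nlinarith [abs_nonneg δ, abs_nonneg t]
  constructor <;> linarith [abs_le.mp h]

lemma amplitudeSq_mem_Icc (hη : 0 ≤ η) (hδη : |δ| * η ≤ 1) (ht : |t| ≤ 1 / 2) :
    amplitudeSq δ η t ∈ Icc (1 / 2 : ℝ) 2 := by
  obtain ⟨hD₁, hD₂⟩ := one_add_mul_mem_Icc hη hδη ht
  have ht2 : t ^ 2 ≤ 1 / 4 := by nlinarith [sq_abs t, abs_nonneg t]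
  unfold amplitudeSq
  constructor
  · rw [le_div_iff₀ (by linarith)]; nlinarith
  · rw [div_le_iff₀ (by linarith)]; nlinarith [sq_nonneg t]

lemma abs_phaseCorrection_le (hη : 0 ≤ η) (hη₁ : η ≤ 1) (hδη : |δ| * η ≤ 1)
    (ht : |t| ≤ 1 / 2) : |phaseCorrection α β γ δ η t| ≤ |α| + 2 * |β| + |γ| := by
  obtain ⟨hR₁, hR₂⟩ := amplitudeSq_mem_Icc hη hδη ht
  set R := amplitudeSq δ η t
  have hR : |R| ≤ 2 := abs_le.mpr ⟨by linarith, hR₂⟩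
  have hβ : |β * R| ≤ 2 * |β| := by
    rw [abs_mul]; nlinarith [abs_nonneg β]
  have hγ : |η * γ * R * t| ≤ |γ| := by
    rw [abs_mul, abs_mul, abs_mul, abs_of_nonneg hη]
    have hRt : η * (|R| * |t|) ≤ 1 := by
      nlinarith [abs_nonneg R, abs_nonneg t, mul_nonneg (abs_nonneg R) (abs_nonneg t)]
    calc η * |γ| * |R| * |t| = |γ| * (η * (|R| * |t|)) := by ring
      _ ≤ |γ| := mul_le_of_le_one_right (abs_nonneg γ) hRt
  calc |α + β * R + η * γ * R * t| ≤ |α| + |β * R| + |η * γ * R * t| :=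
        (abs_add_le _ _).trans (add_le_add_left (abs_add_le _ _) _)
    _ ≤ |α| + 2 * |β| + |γ| := by linarith

lemma continuousOn_phaseMap (kp : ℝ) {s : Set ℝ} (hs : ∀ t ∈ s, 1 + η * δ * t ≠ 0) :
    ContinuousOn (phaseMap α β γ δ kp η) s := by
  have hR : ContinuousOn (amplitudeSq δ η) s := ContinuousOn.div (by fun_prop) (by fun_prop) hs
  unfold phaseMap phaseCorrection
  fun_prop

lemma abs_le_half_of_abs_sub_le {A kp : ℝ} (hkp : |kp| ≤ 1 / 2) (hAη : A * η ≤ 1 / 4)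
    (he : |t - kp / 2| ≤ A * η) : |t| ≤ 1 / 2 := by
  rw [abs_le] at hkp he ⊢
  constructor <;> linarith

lemma exists_isFixedPt_phaseMap {kp : ℝ} (hη : 0 ≤ η) (hη₁ : η ≤ 1) (hδη : |δ| * η ≤ 1)
    (hAη : (|α| + 2 * |β| + |γ|) * η ≤ 1 / 4) (hkp : |kp| ≤ 1 / 2) :
    ∃ t, |t - kp / 2| ≤ (|α| + 2 * |β| + |γ|) * η ∧ IsFixedPt (phaseMap α β γ δ kp η) t := by
  set A := |α| + 2 * |β| + |γ|
  have hI : ∀ t ∈ Icc (kp / 2 - A * η) (kp / 2 + A * η), |t| ≤ 1 / 2 := fun t ht =>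
    abs_le_half_of_abs_sub_le hkp hAη (abs_sub_comm t _ ▸ mem_Icc_iff_abs_le.mpr ht)
  have hcont : ContinuousOn (phaseMap α β γ δ kp η) (Icc (kp / 2 - A * η) (kp / 2 + A * η)) :=
    continuousOn_phaseMap kp fun t ht =>
      (lt_of_lt_of_le one_half_pos (one_add_mul_mem_Icc hη hδη (hI t ht)).1).ne'
  have hmaps : MapsTo (phaseMap α β γ δ kp η) (Icc (kp / 2 - A * η) (kp / 2 + A * η))
      (Icc (kp / 2 - A * η) (kp / 2 + A * η)) := by
    intro t ht
    rw [← mem_Icc_iff_abs_le, phaseMap, sub_sub_cancel, abs_mul, abs_of_nonneg hη, mul_comm]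
    exact mul_le_mul_of_nonneg_right (abs_phaseCorrection_le hη hη₁ hδη (hI t ht)) hη
  have hAη₀ : 0 ≤ A * η := by positivity
  obtain ⟨t, ht, hfix⟩ := exists_mem_Icc_isFixedPt_of_mapsTo hcont (by linarith) hmaps
  exact ⟨t, abs_sub_comm t _ ▸ mem_Icc_iff_abs_le.mpr ht, hfix⟩

lemma abs_amplitudeSq_sub_le {A kp : ℝ} (hη : 0 ≤ η) (hδη : |δ| * η ≤ 1) (hA : 0 ≤ A)
    (hkp : |kp| ≤ 2) (ht : |t| ≤ 1 / 2) (he : |t - kp / 2| ≤ A * η) :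
    |amplitudeSq δ η t - (1 - kp ^ 2 / 4)| ≤ 2 * ((A + |δ|) * (1 + A)) * η * (|kp| + η) := by
  obtain ⟨hD₁, -⟩ := one_add_mul_mem_Icc hη hδη ht
  set e := t - kp / 2
  have hkey : (1 + η * δ * t) * (amplitudeSq δ η t - (1 - kp ^ 2 / 4))
      = -(kp * e) - e ^ 2 - η * δ * t * (1 - kp ^ 2 / 4) := by
    unfold amplitudeSq; field_simp; ring
  have hkp4 : |1 - kp ^ 2 / 4| ≤ 1 := by
    rw [abs_le]; constructor <;> nlinarith [sq_abs kp, abs_nonneg kp, sq_nonneg kp]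
  have htkp : |t| ≤ |kp| + A * η := by
    have := abs_sub_abs_le_abs_sub t (kp / 2)
    rw [abs_div, abs_two] at this
    linarith [abs_nonneg kp]
  have h₁ : |kp * e| ≤ |kp| * (A * η) := by
    rw [abs_mul]; exact mul_le_mul_of_nonneg_left he (abs_nonneg kp)
  have h₂ : |e ^ 2| ≤ (A * η) ^ 2 := by
    rw [abs_pow]; exact pow_le_pow_left₀ (abs_nonneg e) he 2
  have h₃ : |η * δ * t * (1 - kp ^ 2 / 4)| ≤ η * |δ| * (|kp| + A * η) := by
    rw [abs_mul, abs_mul, abs_mul, abs_of_nonneg hη]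
    have := mul_le_mul htkp hkp4 (abs_nonneg _) (by positivity)
    have hηδ : 0 ≤ η * |δ| := by positivity
    nlinarith [mul_le_mul_of_nonneg_left this hηδ]
  have hsum : |(1 + η * δ * t) * (amplitudeSq δ η t - (1 - kp ^ 2 / 4))|
      ≤ (A + |δ|) * (1 + A) * η * (|kp| + η) := by
    rw [hkey]
    calc |-(kp * e) - e ^ 2 - η * δ * t * (1 - kp ^ 2 / 4)|
        ≤ |kp * e| + |e ^ 2| + |η * δ * t * (1 - kp ^ 2 / 4)| := by
          refine (abs_sub _ _).trans (add_le_add_left ((abs_sub _ _).trans ?_) _)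
          rw [abs_neg]
      _ ≤ (A + |δ|) * η * (|kp| + A * η) := by nlinarith
      _ ≤ (A + |δ|) * (1 + A) * η * (|kp| + η) := by
          have : 0 ≤ (A + |δ|) * η := by positivity
          nlinarith [abs_nonneg kp, mul_nonneg this (abs_nonneg kp), mul_nonneg this hη]
  rw [abs_mul, abs_of_pos (by linarith)] at hsum
  have hX := abs_nonneg (amplitudeSq δ η t - (1 - kp ^ 2 / 4))
  nlinarith

variable {ε kp r₀ r₁ : ℝ}

lemma phase_relation (hε : ε ≠ 0) (hr₀ : r₀ ≠ 0) (hsq : r₀ ^ 2 = amplitudeSq δ (ε ^ 2) t)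
    (hr₁ : r₁ = ε * t * r₀) (hfix : IsFixedPt (phaseMap α β γ δ kp (ε ^ 2)) t) :
    (1 + ε ^ 2 * kp) / (2 * ε) - 1 / (2 * ε) - ε ^ 3 * (α + β * r₀ ^ 2 + ε * γ * r₀ * r₁)
      = r₁ / r₀ := by
  have hP : α + β * r₀ ^ 2 + ε * γ * r₀ * r₁ = phaseCorrection α β γ δ (ε ^ 2) t := by
    rw [phaseCorrection, ← hsq, hr₁]; ring
  have hdet : (1 + ε ^ 2 * kp) / (2 * ε) - 1 / (2 * ε) = ε * kp / 2 := by field_simp; ring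
  have hfix' : kp / 2 - ε ^ 2 * phaseCorrection α β γ δ (ε ^ 2) t = t := hfix
  rw [hP, hr₁, mul_div_cancel_right₀ _ hr₀, hdet]
  linear_combination ε * hfix'

lemma amplitude_relation (hD : 1 + ε ^ 2 * δ * t ≠ 0) (hr₀ : r₀ ≠ 0)
    (hsq : r₀ ^ 2 = amplitudeSq δ (ε ^ 2) t) (hr₁ : r₁ = ε * t * r₀) :
    (r₁ / r₀) ^ 2 = -ε ^ 2 * (-1 + r₀ ^ 2 + ε * δ * r₀ * r₁) := by
  have hR : r₀ ^ 2 * (1 + ε ^ 2 * δ * t) = 1 - t ^ 2 := by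
    rw [hsq, amplitudeSq, div_mul_cancel₀ _ hD]
  rw [hr₁, mul_div_cancel_right₀ _ hr₀]
  linear_combination ε ^ 2 * hR

lemma abs_mul_mul_sub_le {A : ℝ} (hε : 0 ≤ ε) (hr₀ : 0 ≤ r₀) (hr₀₂ : r₀ ≤ 2)
    (he : |t - kp / 2| ≤ A * ε ^ 2) : |ε * t * r₀ - ε * r₀ * kp / 2| ≤ 2 * A * ε ^ 3 :=
  calc |ε * t * r₀ - ε * r₀ * kp / 2| = ε * r₀ * |t - kp / 2| := by
        rw [show ε * t * r₀ - ε * r₀ * kp / 2 = ε * r₀ * (t - kp / 2) by ring, abs_mul,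
          abs_of_nonneg (mul_nonneg hε hr₀)]
    _ ≤ ε * 2 * (A * ε ^ 2) := by gcongr
    _ = 2 * A * ε ^ 3 := by ring

end RotatingWave

open RotatingWave in
/-- Existence of the amplitudes `(r₀, r₁)` of the rotating-wave periodic solutions
of the truncated 1:1 resonance system, with the asymptotic estimates
`r₀² = 1 − k₊²/4 + O(ε²(|k₊| + ε²))` and `r₁ = ε r₀ k₊/2 + O(ε³)`. -/
theorem rotating_wave_amplitudes_exist (α β γ δ : ℝ) :
    ∃ ε₀ > (0 : ℝ), ∃ k₀ > (0 : ℝ), ∃ C > (0 : ℝ),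
      ∀ ε ∈ Set.Ioo (0 : ℝ) ε₀, ∀ kp : ℝ, |kp| ≤ k₀ →
        ∃ r₀ r₁ : ℝ, 0 < r₀ ∧
          ((1 + ε ^ 2 * kp) / (2 * ε)) - 1 / (2 * ε)
              - ε ^ 3 * (α + β * r₀ ^ 2 + ε * γ * r₀ * r₁) = r₁ / r₀ ∧
          (r₁ / r₀) ^ 2 = -ε ^ 2 * (-1 + r₀ ^ 2 + ε * δ * r₀ * r₁) ∧
          |r₀ ^ 2 - (1 - kp ^ 2 / 4)| ≤ C * ε ^ 2 * (|kp| + ε ^ 2) ∧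
          |r₁ - ε * r₀ * kp / 2| ≤ C * ε ^ 3 := by
  set A := |α| + 2 * |β| + |γ|
  have hA : 0 ≤ A := by positivity
  refine ⟨1 / (4 * (A + |δ| + 1)), by positivity, 1 / 2, by norm_num,
    2 * (A + |δ| + 1) ^ 2, by positivity, ?_⟩
  rintro ε ⟨hε, hεε₀⟩ kp hkp
  have hsmall : ε * (A + |δ| + 1) < 1 / 4 := by
    rw [lt_div_iff₀ (by positivity)] at hεε₀
    linarith
  obtain ⟨hη₁, hδη, hAη⟩ : ε ^ 2 ≤ 1 ∧ |δ| * ε ^ 2 ≤ 1 ∧ A * ε ^ 2 ≤ 1 / 4 := by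
    refine ⟨?_, ?_, ?_⟩ <;> nlinarith [abs_nonneg δ]
  obtain ⟨t, he, hfix⟩ := exists_isFixedPt_phaseMap (by positivity) hη₁ hδη hAη hkp
  have ht := abs_le_half_of_abs_sub_le hkp hAη he
  obtain ⟨hR₁, hR₂⟩ := amplitudeSq_mem_Icc (sq_nonneg ε) hδη ht
  set r₀ := √(amplitudeSq δ (ε ^ 2) t)
  have hr₀ : 0 < r₀ := Real.sqrt_pos.mpr (by linarith)
  have hsq : r₀ ^ 2 = amplitudeSq δ (ε ^ 2) t := Real.sq_sqrt (by linarith)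
  have hD := (one_add_mul_mem_Icc (sq_nonneg ε) hδη ht).1
  refine ⟨r₀, ε * t * r₀, hr₀, phase_relation hε.ne' hr₀.ne' hsq rfl hfix,
    amplitude_relation (by linarith) hr₀.ne' hsq rfl, ?_, ?_⟩
  · rw [hsq]
    refine (abs_amplitudeSq_sub_le (sq_nonneg ε) hδη hA (by linarith) ht he).trans ?_
    gcongr
    nlinarith [abs_nonneg δ]
  · refine (abs_mul_mul_sub_le hε.le hr₀.le (by nlinarith) he).trans ?_
    gcongr
    nlinarith [abs_nonneg δ]
end

section
/- Let σ₀ ∈ ℝ and C > 0. There exist ε₀ > 0, k₀ > 0 and C' > 0 such that for every ε ∈ (0, ε₀), every real k with |k| ≤ k₀, and every continuous function R : [1/2, 3/2] → ℝ with |R(A)| ≤ C ε⁴ for all A ∈ [1/2, 3/2], there exists A₀ ∈ [1/2, 3/2] satisfying A₀ (1 − k²/4 − A₀² + σ₀ ε² k A₀²) + R(A₀) = 0 and |A₀² − (1 − k²/4 + σ₀ ε² k)| ≤ C' (ε² |k|³ + ε⁴). -/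
set_option maxHeartbeats 1000000

/-- Existence of the equilibrium amplitude `A₀^{(-∞)}` at `x = −∞` of the perturbed
reduced system, solving `A₀(1 − k²/4 − A₀² + σ₀ε²kA₀²) + R(A₀) = 0` with the estimate
`A₀² = 1 − k²/4 + σ₀ε²k + O(ε²|k|³ + ε⁴)`. -/
theorem equilibrium_amplitude_at_minus_infinity (σ₀ C : ℝ) (hC : 0 < C) :
    ∃ ε₀ > (0 : ℝ), ∃ k₀ > (0 : ℝ), ∃ C' > (0 : ℝ),
      ∀ ε ∈ Set.Ioo (0 : ℝ) ε₀, ∀ k : ℝ, |k| ≤ k₀ →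
        ∀ R : ℝ → ℝ, ContinuousOn R (Set.Icc (1/2 : ℝ) (3/2)) →
          (∀ A ∈ Set.Icc (1/2 : ℝ) (3/2), |R A| ≤ C * ε ^ 4) →
          ∃ A₀ ∈ Set.Icc (1/2 : ℝ) (3/2),
            A₀ * (1 - k ^ 2 / 4 - A₀ ^ 2 + σ₀ * ε ^ 2 * k * A₀ ^ 2) + R A₀ = 0 ∧
            |A₀ ^ 2 - (1 - k ^ 2 / 4 + σ₀ * ε ^ 2 * k)| ≤ C' * (ε ^ 2 * |k| ^ 3 + ε ^ 4) := by
  have hσ0 : (0:ℝ) ≤ |σ₀| := abs_nonneg σ₀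
  set M : ℝ := |σ₀| + C + 1 with hMdef
  have hM1 : (1:ℝ) ≤ M := by linarith
  have hσM : |σ₀| ≤ M := by linarith
  have hCM : C ≤ M := by linarith
  clear_value M
  have hMpos : (0:ℝ) < M := by linarith
  have hM2 : (1:ℝ) ≤ M^2 := by
    have := mul_le_mul hM1 hM1 zero_le_one (by linarith : (0:ℝ) ≤ M)
    calc (1:ℝ) = 1*1 := by ring
      _ ≤ M*M := this
      _ = M^2 := by ring
  have hMM : M ≤ M^2 := by
    have := mul_le_mul_of_nonneg_left hM1 hMpos.le
    calc M = M*1 := by ring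
      _ ≤ M*M := this
      _ = M^2 := by ring
  refine ⟨1/(1000*M^2), by positivity, 1/2, by norm_num, 10*M^2, by positivity, ?_⟩
  rintro ε ⟨hε0, hεlt⟩ k hk R hRc hRb
  set K : ℝ := |k| with hKdef
  have hK0 : (0:ℝ) ≤ K := abs_nonneg k
  have hk2 : k^2 = K^2 := (sq_abs k).symm
  have hσabs : ∀ x : ℝ, |σ₀ * ε^2 * k * x| = |σ₀| * ε^2 * K * |x| := by
    intro x
    rw [abs_mul, abs_mul, abs_mul, abs_pow, abs_of_pos hε0]
  have hσabs1 : |σ₀ * ε^2 * k| = |σ₀| * ε^2 * K := by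
    rw [abs_mul, abs_mul, abs_pow, abs_of_pos hε0]
  clear_value K
  have hK : K ≤ 1/2 := hk
  have hK2 : K^2 ≤ 1/4 := by
    have := pow_le_pow_left₀ hK0 hK 2
    norm_num at this
    linarith
  have hεM : ε * (1000*M^2) < 1 := (lt_div_iff₀ (by positivity)).mp hεlt
  have hε1 : ε ≤ 1 := by
    have h1 : ε*1 ≤ ε*M^2 := mul_le_mul_of_nonneg_left hM2 hε0.le
    have h2 : (0:ℝ) ≤ ε*M^2 := by positivity
    linarith
  have hεsq : ε^2 ≤ ε := by
    have h1 : ε*ε ≤ ε*1 := mul_le_mul_of_nonneg_left hε1 hε0.le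
    calc ε^2 = ε*ε := by ring
      _ ≤ ε*1 := h1
      _ = ε := by ring
  have hMε : M^2 * ε^2 ≤ 1/1000 := by
    have h1 : ε*(ε*(1000*M^2)) ≤ ε*1 := mul_le_mul_of_nonneg_left hεM.le hε0.le
    have h2 : ε*(ε*(1000*M^2)) = 1000*(M^2*ε^2) := by ring
    linarith
  have hε21 : ε^2 ≤ 1/1000 := by
    have h1 : ε^2*1 ≤ ε^2*M^2 := mul_le_mul_of_nonneg_left hM2 (sq_nonneg ε)
    have h2 : ε^2*M^2 = M^2*ε^2 := by ring
    linarith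
  set S : ℝ := ε^2*K^3 + ε^4 with hSdef
  have hSpos : 0 < S := by positivity
  have hε4S : ε^4 ≤ S := by
    have : (0:ℝ) ≤ ε^2*K^3 := by positivity
    linarith
  have hSε : S ≤ ε^2 := by
    have hK3 : K^3 ≤ 1/8 := by
      have := pow_le_pow_left₀ hK0 hK 3
      norm_num at this
      linarith
    have h1 : ε^2*K^3 ≤ ε^2*(1/8) := mul_le_mul_of_nonneg_left hK3 (sq_nonneg ε)
    have h2 : ε^2*ε^2 ≤ ε^2*(1/1000) := mul_le_mul_of_nonneg_left hε21 (sq_nonneg ε)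
    have h3 : ε^4 = ε^2*ε^2 := by ring
    linarith
  clear_value S
  set η : ℝ := 10*M^2*S with hηdef
  have hηpos : 0 < η := by positivity
  have hηM : η ≤ 10 * (M^2 * ε^2) := by
    have h1 : (10*M^2)*S ≤ (10*M^2)*ε^2 :=
      mul_le_mul_of_nonneg_left hSε (by positivity)
    calc η = (10*M^2)*S := hηdef
      _ ≤ (10*M^2)*ε^2 := h1
      _ = 10*(M^2*ε^2) := by ring
  clear_value η
  have hη : η ≤ 1/100 := by linarith
  set m : ℝ := 1 - k^2/4 + σ₀*ε^2*k with hmdef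
  have hσεK : |σ₀| * ε^2 * K ≤ 1/2000 := by
    have f0 : (0:ℝ) ≤ ε^2*K := by positivity
    have f1 : |σ₀| *(ε^2*K) ≤ M*(ε^2*K) := mul_le_mul_of_nonneg_right hσM f0
    have f2 : (ε^2)*K ≤ (ε^2)*(1/2) := mul_le_mul_of_nonneg_left hK (sq_nonneg ε)
    have f3 : M*(ε^2*K) ≤ M*(ε^2*(1/2)) := mul_le_mul_of_nonneg_left f2 hMpos.le
    have f4 : M*ε^2 ≤ M^2*ε^2 := mul_le_mul_of_nonneg_right hMM (sq_nonneg ε)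
    have e1 : |σ₀| *ε^2*K = |σ₀| *(ε^2*K) := by ring
    have e2 : M*(ε^2*(1/2)) = (1/2)*(M*ε^2) := by ring
    linarith
  have hσk' : -(1/2000 : ℝ) ≤ σ₀*ε^2*k ∧ σ₀*ε^2*k ≤ 1/2000 :=
    abs_le.mp (le_trans (le_of_eq hσabs1) hσεK)
  have hm1 : m - 1 = -(K^2/4) + σ₀*ε^2*k := by rw [hmdef, hk2]; ring
  have hmlo : 3/4 ≤ m := by
    have := hσk'.1
    have hK2' : (0:ℝ) ≤ K^2 := sq_nonneg K
    linarith
  have hmhi : m ≤ 5/4 := by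
    have := hσk'.2
    have hK2' : (0:ℝ) ≤ K^2 := sq_nonneg K
    linarith
  clear_value m
  have hlo : (1:ℝ)/2 ≤ m - η := by linarith
  have hhi : m + η ≤ 2 := by linarith
  have hmη1 : (0:ℝ) ≤ m - η := by linarith
  have hmη2 : m - η ≤ m + η := by linarith
  obtain ⟨a, b, ha2, hb2, ha0, hb0, hab⟩ :
      ∃ a b : ℝ, a^2 = m - η ∧ b^2 = m + η ∧ 0 ≤ a ∧ 0 ≤ b ∧ a ≤ b :=
    ⟨Real.sqrt (m - η), Real.sqrt (m + η), Real.sq_sqrt hmη1,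
      Real.sq_sqrt (le_trans hmη1 hmη2), Real.sqrt_nonneg _, Real.sqrt_nonneg _,
      Real.sqrt_le_sqrt hmη2⟩
  have halo : 7/10 ≤ a := by
    rcases le_or_gt (7/10 : ℝ) a with h | h
    · exact h
    · exfalso
      have h2 : a^2 < (7/10:ℝ)^2 := by
        exact pow_lt_pow_left₀ h ha0 two_ne_zero
      norm_num at h2
      linarith
  have hbhi : b ≤ 3/2 := by
    rcases le_or_gt b (3/2 : ℝ) with h | h
    · exact h
    · exfalso
      have h2 : (3/2:ℝ)^2 < b^2 := by
        exact pow_lt_pow_left₀ h (by norm_num : (0:ℝ) ≤ 3/2) two_ne_zero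
      norm_num at h2
      linarith
  have hsub : Set.Icc a b ⊆ Set.Icc (1/2:ℝ) (3/2) :=
    Set.Icc_subset_Icc (by linarith) (by linarith)
  set f : ℝ → ℝ := fun A => A * (1 - k ^ 2 / 4 - A ^ 2 + σ₀ * ε ^ 2 * k * A ^ 2) + R A
    with hfdef
  clear_value f
  have hfc : ContinuousOn f (Set.Icc a b) := by
    rw [hfdef]
    exact ((by fun_prop : Continuous fun A : ℝ =>
      A * (1 - k ^ 2 / 4 - A ^ 2 + σ₀ * ε ^ 2 * k * A ^ 2)).continuousOn).add
      (hRc.mono hsub)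
  -- error bound helper
  have herr : ∀ A : ℝ, 7/10 ≤ A → A ≤ 3/2 → |A^2 - m| ≤ η →
      |σ₀ * ε^2 * k * (A * (A^2 - 1))| + |R A| ≤ 7/10 * η := by
    intro A hA1 hA2 hA3
    have hRA : |R A| ≤ C * ε^4 := hRb A ⟨by linarith, hA2⟩
    have hA3' := abs_le.mp hA3
    have hσ1 := neg_abs_le (σ₀*ε^2*k)
    have hσ2 := le_abs_self (σ₀*ε^2*k)
    rw [hσabs1] at hσ1 hσ2
    have hA21 : |A^2 - 1| ≤ K^2/4 + |σ₀| * ε^2 * K + η := by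
      rw [abs_le]
      constructor
      · linarith [hA3'.1, sq_nonneg K]
      · linarith [hA3'.2, sq_nonneg K]
    have h1 : |σ₀ * ε^2 * k * (A * (A^2 - 1))| = |σ₀| * ε^2 * K * (A * |A^2 - 1|) := by
      rw [hσabs, abs_mul, abs_of_nonneg (by linarith : (0:ℝ) ≤ A)]
    rw [h1]
    have hb1 : |σ₀| * ε^2 * K * (A * |A^2 - 1|) ≤
        M * (ε^2 * K) * ((3/2) * (K^2/4 + |σ₀| * ε^2 * K + η)) := by
      have h5 : |σ₀| * ε^2 * K * (A * |A^2 - 1|) = |σ₀| * (ε^2 * K) * (A * |A^2 - 1|) := by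
        ring
      rw [h5]
      have h2 : A * |A^2 - 1| ≤ (3/2) * (K^2/4 + |σ₀| * ε^2 * K + η) :=
        mul_le_mul hA2 hA21 (abs_nonneg _) (by norm_num)
      have h4 : (0:ℝ) ≤ A * |A^2 - 1| := mul_nonneg (by linarith) (abs_nonneg _)
      have h3 : (0:ℝ) ≤ ε^2 * K := by positivity
      gcongr
    have hRA' : |R A| ≤ M * S := by
      have g1 : C*ε^4 ≤ C*S := mul_le_mul_of_nonneg_left hε4S hC.le
      have g2 : C*S ≤ M*S := mul_le_mul_of_nonneg_right hCM hSpos.le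
      linarith
    have hMS : (0:ℝ) ≤ M*S := by positivity
    have hM2S : M*S ≤ M^2*S := mul_le_mul_of_nonneg_right hMM hSpos.le
    have t1 : M*(ε^2*K^3) ≤ M*S := by
      have g1 : M*S - M*(ε^2*K^3) = M*ε^4 := by rw [hSdef]; ring
      have g2 : (0:ℝ) ≤ M*ε^4 := by positivity
      linarith
    have t2 : M*(|σ₀| *(ε^4*K^2)) ≤ M^2*S := by
      have g0 : (0:ℝ) ≤ M^2*S := by positivity
      calc M*(|σ₀| *(ε^4*K^2)) ≤ M*(M*(S*(1/4))) := by
            gcongr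
        _ = (1/4)*(M^2*S) := by ring
        _ ≤ M^2*S := by linarith
    have t3 : M*(ε^2*(K*η)) ≤ M^2*S := by
      have e1 : M*(ε^2*(K*η)) = (M^2*ε^2)*(10*(M*S)*K) := by rw [hηdef]; ring
      have e2 : (0:ℝ) ≤ 10*(M*S)*K := by positivity
      have e3 : (M^2*ε^2)*(10*(M*S)*K) ≤ (1/1000)*(10*(M*S)*K) :=
        mul_le_mul_of_nonneg_right hMε e2
      have e4 : (M*S)*K ≤ (M*S)*(1/2) := mul_le_mul_of_nonneg_left hK hMS
      have e5 : (1/1000)*(10*(M*S)*K) = (1/100)*((M*S)*K) := by ring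
      linarith
    have expand : M * (ε^2 * K) * ((3/2) * (K^2/4 + |σ₀| * ε^2 * K + η)) =
        (3/8)*(M*(ε^2*K^3)) + (3/2)*(M*(|σ₀| *(ε^4*K^2))) + (3/2)*(M*(ε^2*(K*η))) := by
      ring
    have total : M * (ε^2 * K) * ((3/2) * (K^2/4 + |σ₀| * ε^2 * K + η)) ≤ 6*(M^2*S) := by
      rw [expand]; linarith
    have hfin : 7/10 * η = 7*(M^2*S) := by rw [hηdef]; ring
    rw [hfin]
    linarith
  -- sign at the endpoints
  have hma : a^2 = 1 - k^2/4 + σ₀*ε^2*k - η := by rw [ha2, hmdef]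
  have hmb : b^2 = 1 - k^2/4 + σ₀*ε^2*k + η := by rw [hb2, hmdef]
  have hfa : 0 ≤ f a := by
    have hya : |a^2 - m| ≤ η := by
      rw [ha2, abs_of_nonpos (by linarith)]; linarith
    have h := herr a halo (by linarith) hya
    have hid : f a = a * η + σ₀ * ε^2 * k * (a * (a^2 - 1)) + R a := by
      rw [hfdef]
      linear_combination (-a) * hma
    have h2 := neg_abs_le (σ₀ * ε^2 * k * (a * (a^2 - 1)))
    have h3 := neg_abs_le (R a)
    have h4 : (7/10)*η ≤ a*η := mul_le_mul_of_nonneg_right halo hηpos.le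
    rw [hid]
    linarith
  have hfb : f b ≤ 0 := by
    have hyb : |b^2 - m| ≤ η := by
      rw [hb2, abs_of_nonneg (by linarith)]; linarith
    have h := herr b (by linarith) hbhi hyb
    have hid : f b = -(b * η) + σ₀ * ε^2 * k * (b * (b^2 - 1)) + R b := by
      rw [hfdef]
      linear_combination (-b) * hmb
    have h2 := le_abs_self (σ₀ * ε^2 * k * (b * (b^2 - 1)))
    have h3 := le_abs_self (R b)
    have h4 : (7/10)*η ≤ b*η :=
      mul_le_mul_of_nonneg_right (le_trans halo hab) hηpos.le
    rw [hid]
    linarith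
  have hmem : (0:ℝ) ∈ Set.Icc (f b) (f a) := ⟨hfb, hfa⟩
  obtain ⟨A₀, hA₀mem, hA₀eq⟩ := intermediate_value_Icc' hab hfc hmem
  rw [hfdef] at hA₀eq
  simp only at hA₀eq
  refine ⟨A₀, hsub hA₀mem, hA₀eq, ?_⟩
  obtain ⟨hA₀a, hA₀b⟩ := hA₀mem
  have hA₀0 : (0:ℝ) ≤ A₀ := le_trans ha0 hA₀a
  have hA₀sq_lo : m - η ≤ A₀^2 := by
    have := pow_le_pow_left₀ ha0 hA₀a 2
    linarith
  have hA₀sq_hi : A₀^2 ≤ m + η := by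
    have := pow_le_pow_left₀ hA₀0 hA₀b 2
    linarith
  have hfinal : |A₀ ^ 2 - m| ≤ η := abs_le.mpr ⟨by linarith, by linarith⟩
  exact hfinal
end
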